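/- Let 0 < ε ≤ x₀, suppose 1 + b(x) ≠ 0 on [−ε, ε], and let t : [−ε, ε] → ℝ be differentiable and satisfy the differential equation t'(x) = ((1 + a(x))/(1 + b(x)))·(1 − 2φ''(x)·t(x))/√(1 + φ'(x)²). Then for every x ∈ [−ε, ε], d/dx W(x, t(x)) = [(1 − 2φ''(x)·t(x))·√(1 + φ'(x)²)/(1 + b(x))]·(τ₁(x) + τ₂(0)). Consequently, at every x where 1 − 2φ''(x)·t(x) ≠ 0 (so the tangent vector is nonzero), the reflection of τ₁(x) across the line spanned by d/dx W(x, t(x)) equals τ₂(0). -/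

import Mathlib

/-- The standard inner product on `ℝ × ℝ`. -/
def dot2 (u v : ℝ × ℝ) : ℝ := u.1 * v.1 + u.2 * v.2

/-- Reflection of a vector `u` across the line spanned by a (nonzero) vector `w`:
`refl_w(u) = 2(⟨u,w⟩/⟨w,w⟩)·w − u`. -/
noncomputable def reflAcross (w u : ℝ × ℝ) : ℝ × ℝ := (2 * (dot2 u w / dot2 w w)) • w - u

/-- `τ₁(x) = (−2φ'(x), 1 − φ'(x)²)/(1 + φ'(x)²)`. -/
noncomputable def tau1 (φ' : ℝ → ℝ) (x : ℝ) : ℝ × ℝ :=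
  (1 / (1 + (φ' x) ^ 2)) • (-2 * φ' x, 1 - (φ' x) ^ 2)

/-- `τ₂(x) = (1, φ'(x))/√(1 + φ'(x)²)`. -/
noncomputable def tau2 (φ' : ℝ → ℝ) (x : ℝ) : ℝ × ℝ :=
  (1 / Real.sqrt (1 + (φ' x) ^ 2)) • (1, φ' x)

/-- `W(x,t) = (x, φ(x)) + t·(−2φ'(x), 1 − φ'(x)²)`. -/
noncomputable def Wmap (φ φ' : ℝ → ℝ) (x t : ℝ) : ℝ × ℝ :=
  (x, φ x) + t • (-2 * φ' x, 1 - (φ' x) ^ 2)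

/-!
Differentiating `W(x, t(x))` gives `(1 - 2φ''t)·(1, φ') + t'·(-2φ', 1 - φ'²)`, which is
`(1 - 2φ''t)√(1 + φ'²)·τ₂(x) + t'(1 + φ'²)·τ₁(x)`. The ODE for `t` and
`τ₂(0) = a τ₁(x) + (1 + b) τ₂(x)` turn this into a multiple of `τ₁(x) + τ₂(0)`. As `τ₁(x)` and
`τ₂(0)` are unit vectors, reflecting one across their sum gives the other; the sum is nonzero
because `τ₁(x)`, `τ₂(x)` are linearly independent and `1 + b ≠ 0`.
-/

lemma reflAcross_smul_left {c : ℝ} (hc : c ≠ 0) (w u : ℝ × ℝ) :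
    reflAcross (c • w) u = reflAcross w u := by
  have hnum : dot2 u (c • w) = c * dot2 u w := by
    simp only [dot2, Prod.smul_fst, Prod.smul_snd, smul_eq_mul]; ring
  have hden : dot2 (c • w) (c • w) = c * (c * dot2 w w) := by
    simp only [dot2, Prod.smul_fst, Prod.smul_snd, smul_eq_mul]; ring
  rw [reflAcross, reflAcross, hnum, hden, mul_div_mul_left _ _ hc, smul_smul]
  congr 2
  rcases eq_or_ne (dot2 w w) 0 with hw | hw
  · simp [hw]
  · field_simp

lemma reflAcross_add_of_dot2_self_eq {u v : ℝ × ℝ} (huv : dot2 u u = dot2 v v)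
    (hne : u + v ≠ 0) : reflAcross (u + v) u = v := by
  obtain ⟨u1, u2⟩ := u
  obtain ⟨v1, v2⟩ := v
  have hpos : dot2 (u1 + v1, u2 + v2) (u1 + v1, u2 + v2) ≠ 0 := by
    simp only [dot2]
    intro h
    apply hne
    simp only [Prod.mk_add_mk, Prod.mk_eq_zero]
    constructor <;> nlinarith [sq_nonneg (u1 + v1), sq_nonneg (u2 + v2)]
  have half : 2 * (dot2 (u1, u2) (u1 + v1, u2 + v2) / dot2 (u1 + v1, u2 + v2) (u1 + v1, u2 + v2))
      = 1 := by
    rw [mul_div_assoc', div_eq_one_iff_eq hpos]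
    simp only [dot2] at huv ⊢
    linear_combination huv
  simp [reflAcross, half]

section Tau

variable (φ' : ℝ → ℝ) (x : ℝ)

lemma dot2_tau1_self : dot2 (tau1 φ' x) (tau1 φ' x) = 1 := by
  simp only [tau1, dot2, Prod.smul_mk, smul_eq_mul]
  field_simp
  ring

lemma dot2_tau2_self : dot2 (tau2 φ' x) (tau2 φ' x) = 1 := by
  have hs := Real.sq_sqrt (by positivity : (0 : ℝ) ≤ 1 + φ' x ^ 2)
  have hs0 : Real.sqrt (1 + φ' x ^ 2) ≠ 0 := by positivity
  simp only [tau2, dot2, Prod.smul_mk, smul_eq_mul]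
  field_simp
  linear_combination -hs

lemma smul_tau1 : (1 + φ' x ^ 2) • tau1 φ' x = (-2 * φ' x, 1 - φ' x ^ 2) := by
  rw [tau1, smul_smul, mul_one_div_cancel (by positivity), one_smul]

lemma sqrt_smul_tau2 : Real.sqrt (1 + φ' x ^ 2) • tau2 φ' x = (1, φ' x) := by
  rw [tau2, smul_smul, mul_one_div_cancel (by positivity), one_smul]

lemma linearIndependent_tau1_tau2 : LinearIndependent ℝ ![tau1 φ' x, tau2 φ' x] := by
  rw [LinearIndependent.pair_iff]
  intro α β h
  have hs0 : Real.sqrt (1 + φ' x ^ 2) ≠ 0 := by positivity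
  have hp : 1 + φ' x ^ 2 ≠ 0 := by positivity
  simp only [tau1, tau2, Prod.smul_mk, smul_eq_mul, Prod.mk_add_mk, Prod.mk_eq_zero] at h
  obtain ⟨h1, h2⟩ := h
  have hα : α = 0 := by
    field_simp at h1 h2
    have h : α * (Real.sqrt (1 + φ' x ^ 2) * (1 + φ' x ^ 2)) = 0 := by
      linear_combination h2 - φ' x * h1
    exact (mul_eq_zero.1 h).resolve_right (mul_ne_zero hs0 hp)
  subst hα
  simpa [hs0] using h1

lemma tau1_add_ne_zero {v : ℝ × ℝ} {α β : ℝ} (hv : v = α • tau1 φ' x + β • tau2 φ' x)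
    (hβ : β ≠ 0) : tau1 φ' x + v ≠ 0 := by
  intro h
  refine hβ ((LinearIndependent.pair_iff.1 (linearIndependent_tau1_tau2 φ' x) (1 + α) β) ?_).2
  rw [← h, hv]
  module

end Tau

lemma hasDerivAt_Wmap_comp {φ φ' t : ℝ → ℝ} {x φ''x t'x : ℝ} (hφ : HasDerivAt φ (φ' x) x)
    (hφ' : HasDerivAt φ' φ''x x) (ht : HasDerivAt t t'x x) :
    HasDerivAt (fun s => Wmap φ φ' s (t s))
      (((1 - 2 * φ''x * t x) * Real.sqrt (1 + φ' x ^ 2)) • tau2 φ' x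
        + (t'x * (1 + φ' x ^ 2)) • tau1 φ' x) x := by
  have hdir : HasDerivAt (fun s => ((-2 * φ' s, 1 - φ' s ^ 2) : ℝ × ℝ))
      (-2 * φ''x, -(2 * φ' x * φ''x)) x := by
    refine (hφ'.const_mul (-2)).prodMk ?_
    simpa using (hφ'.pow 2).const_sub 1
  refine (((hasDerivAt_id x).prodMk hφ).add (ht.smul hdir)).congr_deriv ?_
  rw [mul_smul, mul_smul, sqrt_smul_tau2, smul_tau1]
  ext <;> simp <;> ring

theorem reflecting_curve_reflects_to_fixed_direction_general (x₀ ε : ℝ)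
    (hεx₀ : ε ≤ x₀) (φ φ' φ'' a b t : ℝ → ℝ)
    (hφ : ∀ x ∈ Set.Icc (-x₀) x₀, HasDerivAt φ (φ' x) x)
    (hφ' : ∀ x ∈ Set.Icc (-x₀) x₀, HasDerivAt φ' (φ'' x) x)
    (hab : ∀ x ∈ Set.Icc (-x₀) x₀,
      tau2 φ' 0 = a x • tau1 φ' x + (1 + b x) • tau2 φ' x)
    (hb : ∀ x ∈ Set.Icc (-ε) ε, 1 + b x ≠ 0)
    (hode : ∀ x ∈ Set.Icc (-ε) ε,
      HasDerivAt t
        (((1 + a x) / (1 + b x)) * (1 - 2 * φ'' x * t x) / Real.sqrt (1 + (φ' x) ^ 2)) x) :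
    ∀ x ∈ Set.Icc (-ε) ε,
      HasDerivAt (fun s => Wmap φ φ' s (t s))
        (((1 - 2 * φ'' x * t x) * Real.sqrt (1 + (φ' x) ^ 2) / (1 + b x))
          • (tau1 φ' x + tau2 φ' 0)) x ∧
      (1 - 2 * φ'' x * t x ≠ 0 →
        ((1 - 2 * φ'' x * t x) * Real.sqrt (1 + (φ' x) ^ 2) / (1 + b x))
            • (tau1 φ' x + tau2 φ' 0) ≠ 0 ∧
        reflAcross
          (((1 - 2 * φ'' x * t x) * Real.sqrt (1 + (φ' x) ^ 2) / (1 + b x))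
            • (tau1 φ' x + tau2 φ' 0)) (tau1 φ' x) = tau2 φ' 0) := by
  intro x hx
  have hx₀ : x ∈ Set.Icc (-x₀) x₀ := ⟨by linarith [hx.1], hx.2.trans hεx₀⟩
  have hs0 : Real.sqrt (1 + φ' x ^ 2) ≠ 0 := by positivity
  have hbx := hb x hx
  refine ⟨(hasDerivAt_Wmap_comp (hφ x hx₀) (hφ' x hx₀) (hode x hx)).congr_deriv ?_, fun hnz => ?_⟩
  · have hs : Real.sqrt (1 + φ' x ^ 2) ^ 2 = 1 + φ' x ^ 2 := Real.sq_sqrt (by positivity)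
    rw [hab x hx₀]
    match_scalars <;> field_simp
    rw [hs]
  · have hsum := tau1_add_ne_zero φ' x (hab x hx₀) hbx
    have hc := div_ne_zero (mul_ne_zero hnz hs0) hbx
    refine ⟨smul_ne_zero hc hsum, ?_⟩
    rw [reflAcross_smul_left hc,
      reflAcross_add_of_dot2_self_eq (by rw [dot2_tau1_self, dot2_tau2_self]) hsum]

/-- If `t` satisfies the ODE `t' = ((1+a)/(1+b))·(1 − 2φ''t)/√(1+φ'²)`, then
`d/dx W(x,t(x)) = [(1 − 2φ''(x)t(x))√(1+φ'(x)²)/(1+b(x))]·(τ₁(x) + τ₂(0))`, and where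
`1 − 2φ''(x)t(x) ≠ 0` this tangent vector is nonzero and reflects `τ₁(x)` to `τ₂(0)`. -/
theorem reflecting_curve_reflects_to_fixed_direction (x₀ ε : ℝ) (hx₀ : 0 < x₀)
    (hε : 0 < ε) (hεx₀ : ε ≤ x₀) (φ φ' φ'' φ''' a b t : ℝ → ℝ)
    (hφ : ∀ x ∈ Set.Icc (-x₀) x₀, HasDerivAt φ (φ' x) x)
    (hφ' : ∀ x ∈ Set.Icc (-x₀) x₀, HasDerivAt φ' (φ'' x) x)
    (hφ'' : ∀ x ∈ Set.Icc (-x₀) x₀, HasDerivAt φ'' (φ''' x) x)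
    (hφ'''c : ContinuousOn φ''' (Set.Icc (-x₀) x₀))
    (hconv : ∀ x ∈ Set.Icc (-x₀) x₀, 0 < φ'' x)
    (hab : ∀ x ∈ Set.Icc (-x₀) x₀,
      tau2 φ' 0 = a x • tau1 φ' x + (1 + b x) • tau2 φ' x)
    (hb : ∀ x ∈ Set.Icc (-ε) ε, 1 + b x ≠ 0)
    (hode : ∀ x ∈ Set.Icc (-ε) ε,
      HasDerivAt t
        (((1 + a x) / (1 + b x)) * (1 - 2 * φ'' x * t x) / Real.sqrt (1 + (φ' x) ^ 2)) x) :
    ∀ x ∈ Set.Icc (-ε) ε,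
      HasDerivAt (fun s => Wmap φ φ' s (t s))
        (((1 - 2 * φ'' x * t x) * Real.sqrt (1 + (φ' x) ^ 2) / (1 + b x))
          • (tau1 φ' x + tau2 φ' 0)) x ∧
      (1 - 2 * φ'' x * t x ≠ 0 →
        ((1 - 2 * φ'' x * t x) * Real.sqrt (1 + (φ' x) ^ 2) / (1 + b x))
            • (tau1 φ' x + tau2 φ' 0) ≠ 0 ∧
        reflAcross
          (((1 - 2 * φ'' x * t x) * Real.sqrt (1 + (φ' x) ^ 2) / (1 + b x))
            • (tau1 φ' x + tau2 φ' 0)) (tau1 φ' x) = tau2 φ' 0) :=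
  reflecting_curve_reflects_to_fixed_direction_general x₀ ε hεx₀ φ φ' φ'' a b t hφ hφ' hab hb hode
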